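/- Let X be a metric space and α, β : [0,∞) → X quasi-rays that are strongly asymptotic, i.e. (1/2)·limsup_{t→∞} (infDist (α t) (range β) + infDist (β t) (range α)) = 0. Then their Busemann functions coincide: B_α(x,y) = B_β(x,y) for all x, y ∈ X. -/
import Mathlib

open Filter
open scoped ENNReal

/-- A local unit-speed geodesic on `[0,∞)` is 1-Lipschitz there. -/
lemma busemann_aux_lip {X : Type*} [MetricSpace X] (α : ℝ → X)
    (hloc : ∀ t₀ : ℝ, 0 ≤ t₀ → ∃ δ > 0, ∀ s t : ℝ, 0 ≤ s → 0 ≤ t →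
      |s - t₀| ≤ δ → |t - t₀| ≤ δ → dist (α s) (α t) = |s - t|) :
    ∀ t s : ℝ, 0 ≤ t → t ≤ s → dist (α t) (α s) ≤ s - t := by
  intro t s ht hts
  set S := {u : ℝ | u ∈ Set.Icc t s ∧ dist (α t) (α u) ≤ u - t} with hS
  have htS : t ∈ S := ⟨⟨le_refl t, hts⟩, by simp⟩
  have hSne : S.Nonempty := ⟨t, htS⟩
  have hSbdd : BddAbove S := ⟨s, fun u hu => hu.1.2⟩
  set c := sSup S with hc
  have hc1 : t ≤ c := le_csSup hSbdd htS
  have hc2 : c ≤ s := csSup_le hSne (fun u hu => hu.1.2)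
  have hc0 : (0:ℝ) ≤ c := le_trans ht hc1
  obtain ⟨δ, hδ, hiso⟩ := hloc c hc0
  have hcS : c ∈ S := by
    obtain ⟨u, huS, hugt⟩ := exists_lt_of_lt_csSup hSne (show c - δ < c by linarith)
    have huc : u ≤ c := le_csSup hSbdd huS
    have hu0 : (0:ℝ) ≤ u := le_trans ht huS.1.1
    have hd : dist (α u) (α c) = |u - c| :=
      hiso u c hu0 hc0 (by rw [abs_sub_le_iff]; constructor <;> linarith)
        (by simp [le_of_lt hδ])
    refine ⟨⟨hc1, hc2⟩, ?_⟩
    calc dist (α t) (α c) ≤ dist (α t) (α u) + dist (α u) (α c) := dist_triangle _ _ _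
      _ ≤ (u - t) + |u - c| := add_le_add huS.2 hd.le
      _ = c - t := by rw [abs_sub_comm, abs_of_nonneg (by linarith)]; ring
  rcases eq_or_lt_of_le hc2 with heq | hlt
  · have := hcS.2; rwa [heq] at this
  · exfalso
    set v := min s (c + δ) with hv
    have hvc : c < v := lt_min hlt (by linarith)
    have hv0 : (0:ℝ) ≤ v := le_trans hc0 (le_of_lt hvc)
    have hd : dist (α c) (α v) = |c - v| :=
      hiso c v hc0 hv0 (by simp [le_of_lt hδ])
        (by rw [abs_sub_le_iff]; constructor <;> [linarith [min_le_right s (c + δ)]; linarith])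
    have hvS : v ∈ S := by
      refine ⟨⟨by linarith, min_le_left _ _⟩, ?_⟩
      calc dist (α t) (α v) ≤ dist (α t) (α c) + dist (α c) (α v) := dist_triangle _ _ _
        _ ≤ (c - t) + |c - v| := add_le_add hcS.2 hd.le
        _ = v - t := by rw [abs_sub_comm, abs_of_nonneg (by linarith)]; ring
    have := le_csSup hSbdd hvS
    linarith

/-- Existence of the horofunction limit for a quasi-ray. -/
lemma busemann_aux_exists {X : Type*} [MetricSpace X] (α : ℝ → X) (Δ : ℝ)
    (hlip : ∀ t s : ℝ, 0 ≤ t → t ≤ s → dist (α t) (α s) ≤ s - t)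
    (hΔ : ∀ t s : ℝ, 0 ≤ t → t ≤ s → (s - t) - dist (α t) (α s) ≤ Δ)
    (x : X) : ∃ L : ℝ, Tendsto (fun t : ℝ => dist x (α t) - t) atTop (nhds L) := by
  set g : ℝ → ℝ := fun t => dist x (α (max t 0)) - max t 0 with hg
  have hanti : Antitone g := by
    intro a b hab
    have h1 : max a 0 ≤ max b 0 := max_le_max hab le_rfl
    have h2 : dist x (α (max b 0)) ≤ dist x (α (max a 0)) + (max b 0 - max a 0) := by
      calc dist x (α (max b 0)) ≤ dist x (α (max a 0)) + dist (α (max a 0)) (α (max b 0)) :=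
            dist_triangle _ _ _
        _ ≤ _ := by linarith [hlip (max a 0) (max b 0) (le_max_right a 0) h1]
    simp only [hg]; linarith
  have hbdd : BddBelow (Set.range g) := by
    refine ⟨-Δ - dist x (α 0), ?_⟩
    rintro _ ⟨a, rfl⟩
    have h1 : max a 0 - dist (α 0) (α (max a 0)) ≤ Δ := by
      simpa using hΔ 0 (max a 0) le_rfl (le_max_right a 0)
    have h2 : dist (α 0) (α (max a 0)) ≤ dist (α 0) x + dist x (α (max a 0)) := dist_triangle _ _ _
    have h3 : dist (α 0) x = dist x (α 0) := dist_comm _ _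
    simp only [hg]; linarith
  refine ⟨⨅ a, g a, ?_⟩
  refine (tendsto_atTop_ciInf hanti hbdd).congr' ?_
  filter_upwards [eventually_ge_atTop (0:ℝ)] with a ha
  simp [hg, max_eq_left ha]

/-- Strongly asymptotic quasi-rays have the same Busemann function:
if `α, β : [0,∞) → X` are quasi-rays with
`(1/2)·limsup_{t→∞} (infDist (α t) (β [0,∞)) + infDist (β t) (α [0,∞))) = 0`,
then for all `x, y` the Busemann cocycles of `α` and `β` converge to a common limit. -/
theorem busemann_eq_of_strongly_asymptotic {X : Type*} [MetricSpace X] (α β : ℝ → X)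
    (hαloc : ∀ t₀ : ℝ, 0 ≤ t₀ → ∃ δ > 0, ∀ s t : ℝ, 0 ≤ s → 0 ≤ t →
      |s - t₀| ≤ δ → |t - t₀| ≤ δ → dist (α s) (α t) = |s - t|)
    (hαfin : BddAbove {d : ℝ | ∃ t s : ℝ, 0 ≤ t ∧ t ≤ s ∧
      d = (s - t) - dist (α t) (α s)})
    (hβloc : ∀ t₀ : ℝ, 0 ≤ t₀ → ∃ δ > 0, ∀ s t : ℝ, 0 ≤ s → 0 ≤ t →
      |s - t₀| ≤ δ → |t - t₀| ≤ δ → dist (β s) (β t) = |s - t|)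
    (hβfin : BddAbove {d : ℝ | ∃ t s : ℝ, 0 ≤ t ∧ t ≤ s ∧
      d = (s - t) - dist (β t) (β s)})
    (hasym : (1/2 : ℝ≥0∞) * Filter.limsup (fun t : ℝ => ENNReal.ofReal
        (Metric.infDist (α t) (β '' Set.Ici (0:ℝ)) +
         Metric.infDist (β t) (α '' Set.Ici (0:ℝ)))) atTop = 0) :
    ∀ x y : X, ∃ L : ℝ,
      Tendsto (fun t : ℝ => dist x (α t) - dist (α t) y) atTop (nhds L) ∧
      Tendsto (fun t : ℝ => dist x (β t) - dist (β t) y) atTop (nhds L) := by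
  have lipα := busemann_aux_lip α hαloc
  have lipβ := busemann_aux_lip β hβloc
  obtain ⟨Δα, hΔα'⟩ := hαfin
  have hΔα : ∀ t s : ℝ, 0 ≤ t → t ≤ s → (s - t) - dist (α t) (α s) ≤ Δα :=
    fun t s ht hts => hΔα' ⟨t, s, ht, hts, rfl⟩
  obtain ⟨Δβ, hΔβ'⟩ := hβfin
  have hΔβ : ∀ t s : ℝ, 0 ≤ t → t ≤ s → (s - t) - dist (β t) (β s) ≤ Δβ :=
    fun t s ht hts => hΔβ' ⟨t, s, ht, hts, rfl⟩
  -- extract asymptotic info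
  have hlim0 : Filter.limsup (fun t : ℝ => ENNReal.ofReal
      (Metric.infDist (α t) (β '' Set.Ici (0:ℝ)) +
       Metric.infDist (β t) (α '' Set.Ici (0:ℝ)))) atTop = 0 := by
    rcases mul_eq_zero.mp hasym with h | h
    · exact absurd h (by norm_num)
    · exact h
  have hasy : ∀ ε : ℝ, 0 < ε → ∀ᶠ t : ℝ in atTop,
      Metric.infDist (α t) (β '' Set.Ici (0:ℝ)) < ε := by
    intro ε hε
    have h1 : Filter.limsup (fun t : ℝ => ENNReal.ofReal
        (Metric.infDist (α t) (β '' Set.Ici (0:ℝ)) +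
         Metric.infDist (β t) (α '' Set.Ici (0:ℝ)))) atTop < ENNReal.ofReal ε := by
      rw [hlim0]; exact ENNReal.ofReal_pos.mpr hε
    filter_upwards [Filter.eventually_lt_of_limsup_lt h1] with t ht
    have h2 := (ENNReal.ofReal_lt_ofReal_iff hε).mp ht
    have h3 : (0:ℝ) ≤ Metric.infDist (β t) (α '' Set.Ici (0:ℝ)) := Metric.infDist_nonneg
    linarith
  intro x y
  obtain ⟨Ax, hAx⟩ := busemann_aux_exists α Δα lipα hΔα x
  obtain ⟨Ay, hAy⟩ := busemann_aux_exists α Δα lipα hΔα y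
  obtain ⟨Bx, hBx⟩ := busemann_aux_exists β Δβ lipβ hΔβ x
  obtain ⟨By, hBy⟩ := busemann_aux_exists β Δβ lipβ hΔβ y
  have hfα : Tendsto (fun t : ℝ => dist x (α t) - dist (α t) y) atTop (nhds (Ax - Ay)) := by
    refine (hAx.sub hAy).congr (fun t => ?_)
    rw [dist_comm (α t) y]; ring
  have hfβ : Tendsto (fun t : ℝ => dist x (β t) - dist (β t) y) atTop (nhds (Bx - By)) := by
    refine (hBx.sub hBy).congr (fun t => ?_)
    rw [dist_comm (β t) y]; ring
  refine ⟨Ax - Ay, hfα, ?_⟩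
  suffices h : Ax - Ay = Bx - By by rw [h]; exact hfβ
  have key : ∀ ε : ℝ, 0 < ε → |(Ax - Ay) - (Bx - By)| ≤ 6 * ε := by
    intro ε hε
    rw [Metric.tendsto_atTop] at hfα hfβ
    obtain ⟨N1, hN1⟩ := hfα ε hε
    obtain ⟨N2, hN2⟩ := hfβ ε hε
    obtain ⟨N3, hN3⟩ := (eventually_atTop).mp (hasy ε hε)
    set t := max 0 (max N1 (max N3 (N2 + Δα + dist (α 0) (β 0) + 2*ε))) with htdef
    have ht0 : (0:ℝ) ≤ t := le_max_left _ _
    have ht1 : N1 ≤ t := le_trans (le_max_left _ _) (le_max_right _ _)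
    have ht3 : N3 ≤ t := le_trans (le_trans (le_max_left _ _) (le_max_right _ _)) (le_max_right _ _)
    have ht2 : N2 + Δα + dist (α 0) (β 0) + 2*ε ≤ t :=
      le_trans (le_trans (le_max_right _ _) (le_max_right _ _)) (le_max_right _ _)
    have hinf : Metric.infDist (α t) (β '' Set.Ici (0:ℝ)) < 2*ε :=
      lt_of_lt_of_le (hN3 t ht3) (by linarith)
    have hne : (β '' Set.Ici (0:ℝ)).Nonempty := ⟨β 0, Set.mem_image_of_mem β Set.self_mem_Ici⟩
    obtain ⟨p, hp, hdp⟩ := (Metric.infDist_lt_iff hne).mp hinf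
    obtain ⟨s, hs0, rfl⟩ := hp
    -- s is large
    have h01 : t - dist (α 0) (α t) ≤ Δα := by simpa using hΔα 0 t le_rfl ht0
    have h02 : dist (β 0) (β s) ≤ s := by simpa using lipβ 0 s le_rfl hs0
    have h03 : dist (α 0) (α t) ≤ dist (α 0) (β 0) + dist (β 0) (β s) + dist (β s) (α t) :=
      dist_triangle4 _ _ _ _
    have hcomm : dist (β s) (α t) = dist (α t) (β s) := dist_comm _ _
    have hs2 : N2 ≤ s := by linarith
    have hA := hN1 t ht1
    have hB := hN2 s hs2
    rw [Real.dist_eq] at hA hB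
    have e1 : |dist x (α t) - dist x (β s)| ≤ dist (α t) (β s) := by
      rw [dist_comm x (α t), dist_comm x (β s)]; exact abs_dist_sub_le _ _ _
    have e2 : |dist (α t) y - dist (β s) y| ≤ dist (α t) (β s) := abs_dist_sub_le _ _ _
    have e3 : |(dist x (α t) - dist (α t) y) - (dist x (β s) - dist (β s) y)| ≤
        2 * dist (α t) (β s) := by
      calc |(dist x (α t) - dist (α t) y) - (dist x (β s) - dist (β s) y)|
          = |(dist x (α t) - dist x (β s)) - (dist (α t) y - dist (β s) y)| := by ring_nf
        _ ≤ |dist x (α t) - dist x (β s)| + |dist (α t) y - dist (β s) y| := abs_sub _ _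
        _ ≤ _ := by linarith
    calc |(Ax - Ay) - (Bx - By)|
        ≤ |(Ax - Ay) - (dist x (α t) - dist (α t) y)| +
          |(dist x (α t) - dist (α t) y) - (dist x (β s) - dist (β s) y)| +
          |(dist x (β s) - dist (β s) y) - (Bx - By)| := by
          have := abs_sub_le ((Ax - Ay)) (dist x (α t) - dist (α t) y) (Bx - By)
          have := abs_sub_le (dist x (α t) - dist (α t) y) (dist x (β s) - dist (β s) y) (Bx - By)
          linarith
      _ ≤ 6 * ε := by
          rw [abs_sub_comm (Ax - Ay)]
          linarith
  by_contra hne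
  have hpos : 0 < |(Ax - Ay) - (Bx - By)| := abs_pos.mpr (sub_ne_zero.mpr hne)
  have := key (|(Ax - Ay) - (Bx - By)| / 7) (by positivity)
  linarith
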